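/- Let C ⊆ Rⁿ be a linear code of length n over R. If C is self-orthogonal, i.e., Σᵢ xᵢ·yᵢ = 0 in R for all x, y ∈ C, then its Gray image Φ(C) ⊆ (ZMod 2)^{3n} is self-orthogonal with respect to the standard inner product over ZMod 2: Σ_j Φ(x)_j · Φ(y)_j = 0 for all x, y ∈ C. -/

import Mathlib

open Polynomial

set_option synthInstance.maxHeartbeats 1000000
set_option maxHeartbeats 1000000

noncomputable section

/-- The ring `R = F₂ + uF₂ + u²F₂` with `u³ = u`, realized as `(ZMod 2)[X] ⧸ ⟨X³ - X⟩`. -/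
abbrev R : Type := Polynomial (ZMod 2) ⧸ Ideal.span ({X ^ 3 - X} : Set (Polynomial (ZMod 2)))

/-- `u` is the residue class of `X` in `R`. -/
def u : R := Ideal.Quotient.mk _ (X : Polynomial (ZMod 2))

/-- The element `a + u·b + u²·c` of `R`. -/
def elt (a b c : ZMod 2) : R :=
  algebraMap (ZMod 2) R a + algebraMap (ZMod 2) R b * u + algebraMap (ZMod 2) R c * u ^ 2

/-- `Φ` is the Gray map: `Φ(a + u·b + u²·c) = (a, a + c, b)`. -/
def GraySpec (Φ : R → Fin 3 → ZMod 2) : Prop :=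
  ∀ a b c : ZMod 2, Φ (elt a b c) = ![a, a + c, b]

/-- The coordinatewise extension of the Gray map, `Rⁿ → (ZMod 2)^{3n}`. -/
def grayExt (Φ : R → Fin 3 → ZMod 2) (n : ℕ) (x : Fin n → R) :
    Fin n × Fin 3 → ZMod 2 :=
  fun p => Φ (x p.1) p.2

/-!
Let `T : R → 𝔽₂` take the `u²`-coefficient. Writing `r = a + ub + u²c` and `s = a' + ub' + u²c'`,
the Gray inner product `aa' + (a + c)(a' + c') + bb'` equals `ac' + bb' + ca' + cc'`, which is the
`u²`-coefficient of `rs` once `u³ = u` is used; so `Φ(r) · Φ(s) = T(rs)`. Since `T` is `𝔽₂`-linear,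
`Φ(x) · Φ(y) = T(∑ xᵢ yᵢ) = T(0) = 0`.
-/

namespace AdjoinRoot

variable {K : Type*} [CommRing K] {g : K[X]}

def reducedCoeff (hg : g.Monic) (k : ℕ) : AdjoinRoot g →ₗ[K] K :=
  (lcoeff K k).comp (modByMonicHom hg)

theorem reducedCoeff_mk_of_degree_lt [Nontrivial K] (hg : g.Monic) (k : ℕ) {p : K[X]}
    (hp : p.degree < g.degree) : reducedCoeff hg k (mk g p) = p.coeff k := by
  simp only [reducedCoeff, LinearMap.comp_apply, modByMonicHom_mk, lcoeff_apply,
    (modByMonic_eq_self_iff hg).2 hp]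

theorem exists_mk_eq_of_degree_lt [Nontrivial K] (hg : g.Monic) (r : AdjoinRoot g) :
    ∃ p : K[X], p.degree < g.degree ∧ mk g p = r := by
  obtain ⟨p, rfl⟩ := mk_surjective r
  exact ⟨p %ₘ g, degree_modByMonic_lt p hg, mk_leftInverse hg (mk g p)⟩

end AdjoinRoot

theorem X_pow_three_sub_X_monic : (X ^ 3 - X : (ZMod 2)[X]).Monic :=
  monic_X_pow_sub (by rw [degree_X]; norm_num)

theorem degree_X_pow_three_sub_X : (X ^ 3 - X : (ZMod 2)[X]).degree = 3 := by
  compute_degree!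

theorem u_pow_three : u ^ 3 = u := by
  have h := AdjoinRoot.mk_self (f := (X ^ 3 - X : (ZMod 2)[X]))
  rw [map_sub, map_pow] at h
  exact sub_eq_zero.mp h

theorem elt_eq_mk (a b c : ZMod 2) :
    elt a b c = AdjoinRoot.mk (X ^ 3 - X) (C c * X ^ 2 + C b * X + C a) := by
  show _ = Ideal.Quotient.mk _ _
  simp only [elt, u, map_add, map_mul, map_pow, ← algebraMap_eq, Ideal.Quotient.mk_algebraMap]
  ring

theorem exists_eq_elt (r : R) : ∃ a b c, r = elt a b c := by
  obtain ⟨p, hp, rfl⟩ := AdjoinRoot.exists_mk_eq_of_degree_lt X_pow_three_sub_X_monic r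
  rw [degree_X_pow_three_sub_X] at hp
  refine ⟨p.coeff 0, p.coeff 1, p.coeff 2, ?_⟩
  rw [elt_eq_mk, ← eq_quadratic_of_degree_le_two (Order.le_of_lt_succ hp)]

theorem elt_mul (a b c a' b' c' : ZMod 2) :
    elt a b c * elt a' b' c' =
      elt (a * a') (a * b' + b * a' + b * c' + c * b') (a * c' + b * b' + c * a' + c * c') := by
  simp only [elt, map_add, map_mul]
  linear_combination (algebraMap (ZMod 2) R b * algebraMap (ZMod 2) R c' +
    algebraMap (ZMod 2) R c * algebraMap (ZMod 2) R b' +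
    algebraMap (ZMod 2) R c * algebraMap (ZMod 2) R c' * u) * u_pow_three

def u2Coeff : R →ₗ[ZMod 2] ZMod 2 :=
  AdjoinRoot.reducedCoeff X_pow_three_sub_X_monic 2

theorem u2Coeff_elt (a b c : ZMod 2) : u2Coeff (elt a b c) = c := by
  have hdeg : (C c * X ^ 2 + C b * X + C a).degree <
      (X ^ 3 - X : (ZMod 2)[X]).degree := by
    rw [degree_X_pow_three_sub_X]
    exact degree_quadratic_le.trans_lt (by decide)
  rw [elt_eq_mk]
  exact (AdjoinRoot.reducedCoeff_mk_of_degree_lt _ _ hdeg).trans (by simp)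

theorem gray_dot_eq_u2Coeff_mul {Φ : R → Fin 3 → ZMod 2} (hΦ : GraySpec Φ) (r s : R) :
    ∑ j, Φ r j * Φ s j = u2Coeff (r * s) := by
  obtain ⟨a, b, c, rfl⟩ := exists_eq_elt r
  obtain ⟨a', b', c', rfl⟩ := exists_eq_elt s
  rw [hΦ, hΦ, elt_mul, u2Coeff_elt, Fin.sum_univ_three]
  revert a b c a' b' c'
  decide

/-- If a linear code `C` of length `n` over `R` is self-orthogonal, then so is its Gray
image `Φ(C)` with respect to the standard inner product over `ZMod 2`. -/
theorem grayImage_self_orthogonal (n : ℕ) (Φ : R → Fin 3 → ZMod 2) (hΦ : GraySpec Φ)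
    (C : Submodule R (Fin n → R))
    (hso : ∀ x ∈ C, ∀ y ∈ C, ∑ i, x i * y i = 0) :
    ∀ x ∈ C, ∀ y ∈ C,
      ∑ p : Fin n × Fin 3, grayExt Φ n x p * grayExt Φ n y p = 0 := by
  intro x hx y hy
  calc ∑ p : Fin n × Fin 3, grayExt Φ n x p * grayExt Φ n y p
      = ∑ i, ∑ j, Φ (x i) j * Φ (y i) j := Fintype.sum_prod_type _
    _ = u2Coeff (∑ i, x i * y i) := by simp only [gray_dot_eq_u2Coeff_mul hΦ, map_sum]
    _ = 0 := by rw [hso x hx y hy, map_zero]
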